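/- Consider a finite MDP such that P^π g⋆ = g⋆ for every deterministic policy π, where (g⋆, h⋆) is a solution of the modified Bellman equations. Run Anc-VI with λ_k = 2/(k+2) for k ≥ 1 and starting point V^0, with π_k a greedy policy for V^k. Then for every k ≥ 1, ‖g⋆ − g^{π_k}‖_∞ ≤ ‖TV^k − V^k − g⋆‖_∞ ≤ (8/(k+1))‖V^0 − h⋆‖_∞. -/

import Mathlib

open Finset Filter

noncomputable section

/-- A finite Markov decision process: a transition kernel `P` assigning to each
state-action pair a probability distribution over states, and a reward `r`. -/
structure FinMDP (S A : Type) [Fintype S] [Fintype A] where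
  P : S → A → S → ℝ
  r : S → A → ℝ
  P_nonneg : ∀ s a s', 0 ≤ P s a s'
  P_sum_one : ∀ s a, ∑ s', P s a s' = 1

variable {S A : Type} [Fintype S] [Nonempty S] [Fintype A] [Nonempty A]

/-- The transition operator `P^π` induced by a deterministic policy `π`. -/
def Pop (M : FinMDP S A) (p : S → A) (V : S → ℝ) : S → ℝ :=
  fun s => ∑ s', M.P s (p s) s' * V s'

/-- The reward vector `r^π` induced by a deterministic policy `π`. -/
def rPol (M : FinMDP S A) (p : S → A) : S → ℝ := fun s => M.r s (p s)

/-- The Bellman optimality operator `T`. -/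
def bellman (M : FinMDP S A) (V : S → ℝ) : S → ℝ :=
  fun s => Finset.univ.sup' Finset.univ_nonempty
    (fun a => M.r s a + ∑ s', M.P s a s' * V s')

/-- A deterministic policy `π` is greedy for `V` if `r^π + P^π V = T V`. -/
def IsGreedy (M : FinMDP S A) (p : S → A) (V : S → ℝ) : Prop :=
  rPol M p + Pop M p V = bellman M V

/-- `(g, h)` is a solution of the modified Bellman equations:
`max_π P^π g = g`, `max_π (r^π + P^π h) = h + g` (entrywise maxima over
deterministic policies, equivalently over actions), and some deterministic
policy attains both maxima simultaneously. -/
def IsMBESolution (M : FinMDP S A) (g h : S → ℝ) : Prop :=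
  (∀ s, (Finset.univ.sup' Finset.univ_nonempty
      fun a => ∑ s', M.P s a s' * g s') = g s) ∧
  (∀ s, bellman M h s = h s + g s) ∧
  (∃ p : S → A, Pop M p g = g ∧ rPol M p + Pop M p h = h + g)

/-- The average reward `g^π(s) = liminf_{T→∞} (1/T) ∑_{t<T} ((P^π)^t r^π)(s)`. -/
def avgReward (M : FinMDP S A) (p : S → A) : S → ℝ :=
  fun s => Filter.liminf
    (fun T : ℕ => (1 / (T : ℝ)) * ∑ t ∈ Finset.range T, ((Pop M p)^[t] (rPol M p)) s)
    Filter.atTop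

/-! ### Auxiliary lemmas -/

lemma norm_le_of_forall_abs_le {f : S → ℝ} {c : ℝ} (h : ∀ s, |f s| ≤ c) : ‖f‖ ≤ c := by
  have hc : 0 ≤ c := le_trans (abs_nonneg _) (h (Classical.arbitrary S))
  exact (pi_norm_le_iff_of_nonneg hc).2 fun s => by rw [Real.norm_eq_abs]; exact h s

lemma abs_apply_le_norm (f : S → ℝ) (s : S) : |f s| ≤ ‖f‖ := by
  rw [← Real.norm_eq_abs]; exact norm_le_pi_norm f s

lemma row_abs_le (M : FinMDP S A) (s : S) (a : A) (f : S → ℝ) :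
    |∑ s', M.P s a s' * f s'| ≤ ‖f‖ := by
  calc |∑ s', M.P s a s' * f s'| ≤ ∑ s', |M.P s a s' * f s'| :=
        Finset.abs_sum_le_sum_abs _ _
    _ ≤ ∑ s' : S, M.P s a s' * ‖f‖ := by
        refine Finset.sum_le_sum fun s' _ => ?_
        rw [abs_mul, abs_of_nonneg (M.P_nonneg s a s')]
        exact mul_le_mul_of_nonneg_left (abs_apply_le_norm f s') (M.P_nonneg s a s')
    _ = ‖f‖ := by rw [← Finset.sum_mul, M.P_sum_one, one_mul]

lemma Pop_norm_le (M : FinMDP S A) (p : S → A) (f : S → ℝ) : ‖Pop M p f‖ ≤ ‖f‖ :=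
  norm_le_of_forall_abs_le fun s => row_abs_le M s (p s) f

lemma Pop_iter_norm_le (M : FinMDP S A) (p : S → A) (f : S → ℝ) (t : ℕ) :
    ‖(Pop M p)^[t] f‖ ≤ ‖f‖ := by
  induction t with
  | zero => simp
  | succ t ih =>
      rw [Function.iterate_succ_apply']
      exact le_trans (Pop_norm_le M p _) ih

lemma Pop_add (M : FinMDP S A) (p : S → A) (f f' : S → ℝ) :
    Pop M p (f + f') = Pop M p f + Pop M p f' := by
  funext s; simp [Pop, mul_add, Finset.sum_add_distrib]

lemma Pop_sub (M : FinMDP S A) (p : S → A) (f f' : S → ℝ) :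
    Pop M p (f - f') = Pop M p f - Pop M p f' := by
  funext s; simp [Pop, mul_sub, Finset.sum_sub_distrib]

lemma Pop_iter_add (M : FinMDP S A) (p : S → A) (f f' : S → ℝ) (t : ℕ) :
    (Pop M p)^[t] (f + f') = (Pop M p)^[t] f + (Pop M p)^[t] f' := by
  induction t generalizing f f' with
  | zero => simp
  | succ t ih => rw [Function.iterate_succ_apply, Function.iterate_succ_apply,
      Function.iterate_succ_apply, Pop_add, ih]

lemma Pop_iter_sub (M : FinMDP S A) (p : S → A) (f f' : S → ℝ) (t : ℕ) :
    (Pop M p)^[t] (f - f') = (Pop M p)^[t] f - (Pop M p)^[t] f' := by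
  induction t generalizing f f' with
  | zero => simp
  | succ t ih => rw [Function.iterate_succ_apply, Function.iterate_succ_apply,
      Function.iterate_succ_apply, Pop_sub, ih]

lemma sup'_add_const (f : A → ℝ) (c : ℝ) :
    Finset.univ.sup' Finset.univ_nonempty (fun a => f a + c)
      = Finset.univ.sup' Finset.univ_nonempty f + c := by
  apply le_antisymm
  · exact Finset.sup'_le _ _ fun a _ =>
      add_le_add_left (Finset.le_sup' f (Finset.mem_univ a)) c
  · have : Finset.univ.sup' Finset.univ_nonempty f
        ≤ Finset.univ.sup' Finset.univ_nonempty (fun a => f a + c) - c :=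
      Finset.sup'_le _ _ fun a _ => le_sub_iff_add_le.2
        (Finset.le_sup' (fun a => f a + c) (Finset.mem_univ a))
    linarith

lemma bellman_le (M : FinMDP S A) (X Y : S → ℝ) (s : S) :
    bellman M X s ≤ bellman M Y s + ‖X - Y‖ := by
  apply Finset.sup'_le
  intro a _
  have h1 : ∑ s', M.P s a s' * X s' - ∑ s', M.P s a s' * Y s' ≤ ‖X - Y‖ := by
    have : ∑ s', M.P s a s' * X s' - ∑ s', M.P s a s' * Y s'
        = ∑ s', M.P s a s' * (X - Y) s' := by
      simp [mul_sub, Finset.sum_sub_distrib]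
    rw [this]
    exact le_trans (le_abs_self _) (row_abs_le M s a (X - Y))
  have h2 : M.r s a + ∑ s', M.P s a s' * Y s' ≤ bellman M Y s :=
    Finset.le_sup' (fun a => M.r s a + ∑ s', M.P s a s' * Y s') (Finset.mem_univ a)
  linarith

lemma bellman_nonexp (M : FinMDP S A) (X Y : S → ℝ) :
    ‖bellman M X - bellman M Y‖ ≤ ‖X - Y‖ := by
  refine norm_le_of_forall_abs_le fun s => abs_le.2 ⟨?_, ?_⟩
  · have := bellman_le M Y X s
    have hsymm : ‖Y - X‖ = ‖X - Y‖ := norm_sub_rev Y X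
    simp only [Pi.sub_apply]
    linarith [bellman_le M Y X s, hsymm ▸ (bellman_le M Y X s)]
  · have := bellman_le M X Y s
    simp only [Pi.sub_apply]
    linarith

lemma bellman_add_smul_g (M : FinMDP S A) (g : S → ℝ)
    (hg : ∀ s a, ∑ s', M.P s a s' * g s' = g s) (X : S → ℝ) (t : ℝ) :
    bellman M (X + t • g) = bellman M X + t • g := by
  funext s
  have key : ∀ a : A, M.r s a + ∑ s', M.P s a s' * (X + t • g) s'
      = (M.r s a + ∑ s', M.P s a s' * X s') + t * g s := by
    intro a
    have : ∑ s', M.P s a s' * (X s' + t * g s')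
        = ∑ s', M.P s a s' * X s' + t * ∑ s', M.P s a s' * g s' := by
      rw [Finset.mul_sum, ← Finset.sum_add_distrib]
      congr 1; funext s'; ring
    simp only [Pi.add_apply, Pi.smul_apply, smul_eq_mul]
    rw [this, hg s a]; ring
  show Finset.univ.sup' Finset.univ_nonempty _ = _
  calc Finset.univ.sup' Finset.univ_nonempty
        (fun a => M.r s a + ∑ s', M.P s a s' * (X + t • g) s')
      = Finset.univ.sup' Finset.univ_nonempty
        (fun a => (M.r s a + ∑ s', M.P s a s' * X s') + t * g s) := by
        exact Finset.sup'_congr _ rfl fun a _ => key a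
    _ = bellman M X s + t * g s := sup'_add_const _ _
    _ = (bellman M X + t • g) s := by simp

/-- The Anc-VI fixed-point residual bound for a nonexpansive operator. -/
lemma ancvi_residual (F : (S → ℝ) → (S → ℝ)) (h0 : S → ℝ)
    (hne : ∀ X Y, ‖F X - F Y‖ ≤ ‖X - Y‖) (hfix : F h0 = h0)
    (W : ℕ → S → ℝ)
    (hW : ∀ k : ℕ, W (k + 1) =
      (2 / ((k : ℝ) + 3)) • W 0 + (1 - 2 / ((k : ℝ) + 3)) • F (W k)) :
    ∀ k : ℕ, 1 ≤ k → ‖F (W k) - W k‖ ≤ 8 / ((k : ℝ) + 1) * ‖W 0 - h0‖ := by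
  set D := ‖W 0 - h0‖ with hDdef
  have hD : 0 ≤ D := norm_nonneg _
  -- all iterates stay within D of the fixed point
  have step1 : ∀ k : ℕ, ‖W k - h0‖ ≤ D := by
    intro k
    induction k with
    | zero => exact le_refl D
    | succ k ih =>
      have hk0 : (0:ℝ) ≤ (k : ℝ) := Nat.cast_nonneg k
      have hl : (0:ℝ) ≤ 2 / ((k : ℝ) + 3) := by positivity
      have hl1 : 2 / ((k : ℝ) + 3) ≤ 1 := by
        rw [div_le_one (by linarith)]; linarith
      have hFk : ‖F (W k) - h0‖ ≤ D := by
        calc ‖F (W k) - h0‖ = ‖F (W k) - F h0‖ := by rw [hfix]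
          _ ≤ ‖W k - h0‖ := hne _ _
          _ ≤ D := ih
      have hnn : (0:ℝ) ≤ 1 - 2 / ((k : ℝ) + 3) := by linarith
      have heq : W (k + 1) - h0 = (2 / ((k : ℝ) + 3)) • (W 0 - h0)
          + (1 - 2 / ((k : ℝ) + 3)) • (F (W k) - h0) := by
        rw [hW k]; module
      rw [heq]
      calc ‖(2 / ((k : ℝ) + 3)) • (W 0 - h0)
            + (1 - 2 / ((k : ℝ) + 3)) • (F (W k) - h0)‖
          ≤ ‖(2 / ((k : ℝ) + 3)) • (W 0 - h0)‖
            + ‖(1 - 2 / ((k : ℝ) + 3)) • (F (W k) - h0)‖ := norm_add_le _ _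
        _ = (2 / ((k : ℝ) + 3)) * ‖W 0 - h0‖
            + (1 - 2 / ((k : ℝ) + 3)) * ‖F (W k) - h0‖ := by
            rw [norm_smul, norm_smul, Real.norm_of_nonneg hl,
              Real.norm_of_nonneg (by linarith)]
        _ ≤ (2 / ((k : ℝ) + 3)) * D + (1 - 2 / ((k : ℝ) + 3)) * D := by
            gcongr
        _ = D := by ring
  have hFnorm : ∀ k : ℕ, ‖F (W k) - h0‖ ≤ D := by
    intro k
    calc ‖F (W k) - h0‖ = ‖F (W k) - F h0‖ := by rw [hfix]
      _ ≤ ‖W k - h0‖ := hne _ _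
      _ ≤ D := step1 k
  have hW0F : ∀ k : ℕ, ‖W 0 - F (W k)‖ ≤ 2 * D := by
    intro k
    calc ‖W 0 - F (W k)‖ = ‖(W 0 - h0) - (F (W k) - h0)‖ := by congr 1; abel
      _ ≤ ‖W 0 - h0‖ + ‖F (W k) - h0‖ := norm_sub_le _ _
      _ ≤ D + D := add_le_add (le_refl D) (hFnorm k)
      _ = 2 * D := by ring
  -- difference of consecutive iterates
  have step2 : ∀ k : ℕ, ‖W (k + 1) - W k‖ ≤ 4 * D / ((k : ℝ) + 2) := by
    intro k
    induction k with
    | zero =>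
      have heq : W 1 - W 0 = (1 - 2 / ((0 : ℝ) + 3)) • (F (W 0) - W 0) := by
        rw [hW 0]; module
      have hFW0 : ‖F (W 0) - W 0‖ ≤ 2 * D := by
        calc ‖F (W 0) - W 0‖ = ‖(F (W 0) - h0) - (W 0 - h0)‖ := by congr 1; abel
          _ ≤ ‖F (W 0) - h0‖ + ‖W 0 - h0‖ := norm_sub_le _ _
          _ ≤ D + D := add_le_add (hFnorm 0) (le_refl D)
          _ = 2 * D := by ring
      rw [heq, norm_smul]
      have : ‖(1 - 2 / ((0:ℝ) + 3))‖ = 1/3 := by norm_num [Real.norm_eq_abs]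
      rw [this]
      push_cast
      linarith
    | succ k ih =>
      have hk0 : (0:ℝ) ≤ (k : ℝ) := Nat.cast_nonneg k
      push_cast
      have heq : W (k + 2) - W (k + 1)
          = (2 / ((k : ℝ) + 4) - 2 / ((k : ℝ) + 3)) • (W 0 - F (W k))
            + (1 - 2 / ((k : ℝ) + 4)) • (F (W (k + 1)) - F (W k)) := by
        have h1 := hW (k + 1)
        have h2 := hW k
        push_cast at h1
        rw [show (k:ℝ) + 1 + 3 = (k:ℝ) + 4 by ring] at h1
        rw [h1, h2]; module
      have hdiff : ‖F (W (k + 1)) - F (W k)‖ ≤ 4 * D / ((k : ℝ) + 2) :=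
        le_trans (hne _ _) ih
      rw [heq]
      have hcoef : |2 / ((k : ℝ) + 4) - 2 / ((k : ℝ) + 3)| = 2 / (((k:ℝ)+3) * ((k:ℝ)+4)) := by
        rw [abs_of_nonpos (by
          have : 2 / ((k : ℝ) + 4) ≤ 2 / ((k : ℝ) + 3) := by gcongr <;> linarith
          linarith)]
        field_simp
        ring
      calc ‖(2 / ((k : ℝ) + 4) - 2 / ((k : ℝ) + 3)) • (W 0 - F (W k))
            + (1 - 2 / ((k : ℝ) + 4)) • (F (W (k + 1)) - F (W k))‖
          ≤ ‖(2 / ((k : ℝ) + 4) - 2 / ((k : ℝ) + 3)) • (W 0 - F (W k))‖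
            + ‖(1 - 2 / ((k : ℝ) + 4)) • (F (W (k + 1)) - F (W k))‖ := norm_add_le _ _
        _ = (2 / (((k:ℝ)+3) * ((k:ℝ)+4))) * ‖W 0 - F (W k)‖
            + (1 - 2 / ((k : ℝ) + 4)) * ‖F (W (k + 1)) - F (W k)‖ := by
            rw [norm_smul, norm_smul, Real.norm_eq_abs, hcoef, Real.norm_of_nonneg (by
              rw [sub_nonneg, div_le_one (by linarith)]; linarith)]
        _ ≤ (2 / (((k:ℝ)+3) * ((k:ℝ)+4))) * (2 * D)
            + (1 - 2 / ((k : ℝ) + 4)) * (4 * D / ((k : ℝ) + 2)) := by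
            have hp : (0:ℝ) < ((k:ℝ)+3) * ((k:ℝ)+4) := by positivity
            have hc2 : (0:ℝ) ≤ 1 - 2 / ((k : ℝ) + 4) := by
              rw [sub_nonneg, div_le_one (by linarith)]; linarith
            gcongr
            exact hW0F k
        _ = 4 * D / (((k : ℝ) + 1) + 2) := by
            have h3 : ((k:ℝ)+3) ≠ 0 := by positivity
            have h4 : ((k:ℝ)+4) ≠ 0 := by positivity
            have h2 : ((k:ℝ)+2) ≠ 0 := by positivity
            field_simp
            ring
      -- note target uses ((k+1 : ℕ) : ℝ) + 2
  -- residual bound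
  intro k hk
  obtain ⟨j, rfl⟩ : ∃ j, k = j + 1 := ⟨k - 1, (Nat.succ_pred_eq_of_pos hk).symm⟩
  have hj0 : (0:ℝ) ≤ (j : ℝ) := Nat.cast_nonneg j
  have heq : F (W (j + 1)) - W (j + 1)
      = (F (W (j + 1)) - F (W j)) + (2 / ((j : ℝ) + 3)) • (F (W j) - W 0) := by
    rw [hW j]; module
  have h1 : ‖F (W (j + 1)) - F (W j)‖ ≤ 4 * D / ((j : ℝ) + 2) :=
    le_trans (hne _ _) (step2 j)
  have h2 : ‖F (W j) - W 0‖ ≤ 2 * D := by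
    rw [norm_sub_rev]; exact hW0F j
  calc ‖F (W (j + 1)) - W (j + 1)‖
      = ‖(F (W (j + 1)) - F (W j)) + (2 / ((j : ℝ) + 3)) • (F (W j) - W 0)‖ := by rw [heq]
    _ ≤ ‖F (W (j + 1)) - F (W j)‖ + ‖(2 / ((j : ℝ) + 3)) • (F (W j) - W 0)‖ :=
        norm_add_le _ _
    _ = ‖F (W (j + 1)) - F (W j)‖ + (2 / ((j : ℝ) + 3)) * ‖F (W j) - W 0‖ := by
        rw [norm_smul, Real.norm_of_nonneg (by positivity)]
    _ ≤ 4 * D / ((j : ℝ) + 2) + (2 / ((j : ℝ) + 3)) * (2 * D) := by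
        gcongr
    _ ≤ 8 / (((j : ℝ) + 1) + 1) * D := by
        have h23 : (0:ℝ) < (j:ℝ) + 2 := by linarith
        have h33 : (0:ℝ) < (j:ℝ) + 3 := by linarith
        have e1 : 4 * D / ((j : ℝ) + 2) ≤ 4 * D / ((j : ℝ) + 2) := le_refl _
        have e2 : (2 / ((j : ℝ) + 3)) * (2 * D) ≤ 4 * D / ((j : ℝ) + 2) := by
          rw [div_mul_eq_mul_div, div_le_div_iff₀ h33 h23]
          nlinarith
        have : 8 / (((j : ℝ) + 1) + 1) * D = 8 * D / ((j:ℝ) + 2) := by ring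
        rw [this]
        have : (8:ℝ) * D / ((j:ℝ)+2) = 4 * D / ((j : ℝ) + 2) + 4 * D / ((j : ℝ) + 2) := by
          ring
        rw [this]
        exact add_le_add e1 e2
    _ = 8 / ((((j : ℕ) + 1 : ℕ) : ℝ) + 1) * D := by push_cast; ring

/-- Shift sequence for reducing Anc-VI on the original MDP to Anc-VI for a
nonexpansive operator with a genuine fixed point. -/
def ancShift : ℕ → ℝ
  | 0 => 0
  | k + 1 => (1 - 2 / ((k : ℝ) + 3)) * (ancShift k + 1)

/-- Corollary (Anc-VI with λ_k = 2/(k+2), MDP with `P^π g⋆ = g⋆` for all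
policies): `O(1/k)` rate on the Bellman and policy errors. -/
theorem ancvi_wc_rate
    (M : FinMDP S A) (g h : S → ℝ) (hsol : IsMBESolution M g h)
    (hcomm : ∀ p : S → A, Pop M p g = g)
    (V : ℕ → S → ℝ) (pol : ℕ → S → A)
    (hV : ∀ k : ℕ, V (k + 1) =
      (2 / ((k : ℝ) + 3)) • V 0 + (1 - 2 / ((k : ℝ) + 3)) • bellman M (V k))
    (hpol : ∀ k : ℕ, IsGreedy M (pol k) (V k)) :
    ∀ k : ℕ, 1 ≤ k →
      ‖g - avgReward M (pol k)‖ ≤ ‖bellman M (V k) - V k - g‖ ∧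
      ‖bellman M (V k) - V k - g‖ ≤ 8 / ((k : ℝ) + 1) * ‖V 0 - h‖ := by
  -- rows of any transition kernel fix g
  have hg : ∀ s a, ∑ s', M.P s a s' * g s' = g s := by
    intro s a
    have := congrFun (hcomm (fun _ => a)) s
    simpa [Pop] using this
  -- the shifted sequence
  set W : ℕ → S → ℝ := fun k => V k - ancShift k • g with hWdef
  have hW0 : W 0 = V 0 := by
    simp [hWdef, ancShift]
  set F : (S → ℝ) → (S → ℝ) := fun X => bellman M X - g with hFdef
  have hne : ∀ X Y, ‖F X - F Y‖ ≤ ‖X - Y‖ := by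
    intro X Y
    have : F X - F Y = bellman M X - bellman M Y := by simp [hFdef]
    rw [this]; exact bellman_nonexp M X Y
  have hfix : F h = h := by
    funext s
    have := hsol.2.1 s
    simp [hFdef, this]
  have hbWk : ∀ k : ℕ, bellman M (W k) = bellman M (V k) - ancShift k • g := by
    intro k
    have : W k = V k + (-(ancShift k)) • g := by
      simp [hWdef, sub_eq_add_neg, neg_smul]
    rw [this, bellman_add_smul_g M g hg, neg_smul, ← sub_eq_add_neg]
  have hWrec : ∀ k : ℕ, W (k + 1) =
      (2 / ((k : ℝ) + 3)) • W 0 + (1 - 2 / ((k : ℝ) + 3)) • F (W k) := by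
    intro k
    have hF : F (W k) = bellman M (V k) - ancShift k • g - g := by
      rw [hFdef]; simp only []; rw [hbWk k]
    rw [hW0]
    show V (k + 1) - ancShift (k + 1) • g = _
    rw [hV k, hF, show ancShift (k + 1) = (1 - 2 / ((k : ℝ) + 3)) * (ancShift k + 1) from rfl]
    module
  have hres : ∀ k : ℕ, F (W k) - W k = bellman M (V k) - V k - g := by
    intro k
    have hF : F (W k) = bellman M (V k) - ancShift k • g - g := by
      rw [hFdef]; simp only []; rw [hbWk k]
    rw [hF]
    show _ - (V k - ancShift k • g) = _
    abel
  have hmain := ancvi_residual F h hne hfix W hWrec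
  intro k hk
  constructor
  · -- policy error bound
    set p := pol k with hp
    set x := V k with hx
    set e : S → ℝ := bellman M x - x - g with he
    set ε := ‖bellman M (V k) - V k - g‖ with hε
    have hεe : ‖e‖ = ε := rfl
    have hε0 : 0 ≤ ε := norm_nonneg _
    -- the reward identity
    have hR : rPol M p = (x - Pop M p x) + g + e := by
      have h1 : rPol M p + Pop M p x = bellman M x := hpol k
      have h2 : bellman M x = x + g + e := by rw [he]; abel
      funext s
      have := congrFun h1 s
      have h2s := congrFun h2 s
      simp only [Pi.add_apply, Pi.sub_apply] at this h2s ⊢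
      linarith
    have hQg : ∀ t : ℕ, (Pop M p)^[t] g = g := by
      intro t
      induction t with
      | zero => rfl
      | succ t ih => rw [Function.iterate_succ_apply', ih, hcomm p]
    have hiter : ∀ t : ℕ, (Pop M p)^[t] (rPol M p)
        = (Pop M p)^[t] x - (Pop M p)^[t + 1] x + g + (Pop M p)^[t] e := by
      intro t
      rw [hR, Pop_iter_add, Pop_iter_add, Pop_iter_sub, hQg t,
        ← Function.iterate_succ_apply]
    -- partial sums
    have hsum : ∀ (T : ℕ) (s : S), ∑ t ∈ Finset.range T, ((Pop M p)^[t] (rPol M p)) s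
        = x s - ((Pop M p)^[T] x) s + T * g s + ∑ t ∈ Finset.range T, ((Pop M p)^[t] e) s := by
      intro T s
      have hterm : ∀ t, ((Pop M p)^[t] (rPol M p)) s
          = (((Pop M p)^[t] x) s - ((Pop M p)^[t + 1] x) s) + (g s + ((Pop M p)^[t] e) s) := by
        intro t
        rw [hiter t]
        simp only [Pi.add_apply, Pi.sub_apply]
        ring
      rw [Finset.sum_congr rfl fun t _ => hterm t, Finset.sum_add_distrib,
        Finset.sum_range_sub' (fun t => ((Pop M p)^[t] x) s), Finset.sum_add_distrib]
      simp only [Function.iterate_zero_apply, Finset.sum_const, Finset.card_range,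
        nsmul_eq_mul]
      ring
    set C := ‖x‖ with hC
    have hC0 : 0 ≤ C := norm_nonneg _
    -- pointwise bound for the averages
    have key : ∀ s : S, |g s - avgReward M p s| ≤ ε := by
      intro s
      set u : ℕ → ℝ := fun T => (1 / (T : ℝ)) *
        ∑ t ∈ Finset.range T, ((Pop M p)^[t] (rPol M p)) s with hu
      have havg : avgReward M p s = Filter.liminf u Filter.atTop := rfl
      have hbound : ∀ T : ℕ, 1 ≤ T → |u T - g s| ≤ ε + 2 * C / T := by
        intro T hT
        have hT' : (0:ℝ) < T := by exact_mod_cast hT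
        have hTne : (T:ℝ) ≠ 0 := ne_of_gt hT'
        have hdiff : u T - g s = (1 / (T : ℝ)) *
            ((x s - ((Pop M p)^[T] x) s) + ∑ t ∈ Finset.range T, ((Pop M p)^[t] e) s) := by
          rw [hu]
          simp only []
          rw [hsum T s]
          field_simp
          ring
        rw [hdiff, abs_mul, abs_of_nonneg (by positivity : (0:ℝ) ≤ 1 / (T:ℝ))]
        have habs : |(x s - ((Pop M p)^[T] x) s) + ∑ t ∈ Finset.range T, ((Pop M p)^[t] e) s|
            ≤ 2 * C + T * ε := by
          have h1 : |x s| ≤ C := abs_apply_le_norm x s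
          have h2 : |((Pop M p)^[T] x) s| ≤ C :=
            le_trans (abs_apply_le_norm _ s) (Pop_iter_norm_le M p x T)
          have h3 : |∑ t ∈ Finset.range T, ((Pop M p)^[t] e) s| ≤ T * ε := by
            calc |∑ t ∈ Finset.range T, ((Pop M p)^[t] e) s|
                ≤ ∑ t ∈ Finset.range T, |((Pop M p)^[t] e) s| :=
                  Finset.abs_sum_le_sum_abs _ _
              _ ≤ ∑ _t ∈ Finset.range T, ε := Finset.sum_le_sum fun t _ =>
                  le_trans (abs_apply_le_norm _ s) (Pop_iter_norm_le M p e t)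
              _ = T * ε := by simp [Finset.sum_const, Finset.card_range]
          calc |(x s - ((Pop M p)^[T] x) s) + ∑ t ∈ Finset.range T, ((Pop M p)^[t] e) s|
              ≤ |x s - ((Pop M p)^[T] x) s| + |∑ t ∈ Finset.range T, ((Pop M p)^[t] e) s| :=
                abs_add_le _ _
            _ ≤ (|x s| + |((Pop M p)^[T] x) s|) + T * ε := add_le_add (abs_sub _ _) h3
            _ ≤ (C + C) + T * ε := by linarith
            _ = 2 * C + T * ε := by ring
        calc (1 / (T:ℝ)) * |(x s - ((Pop M p)^[T] x) s)
              + ∑ t ∈ Finset.range T, ((Pop M p)^[t] e) s|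
            ≤ (1 / (T:ℝ)) * (2 * C + T * ε) := by gcongr
          _ = ε + 2 * C / T := by field_simp; ring
      -- eventual bounds on u
      have hub : ∀ᶠ T in Filter.atTop, u T ≤ (g s + ε) + 2 * C / T := by
        filter_upwards [Filter.eventually_ge_atTop 1] with T hT
        have := (abs_le.1 (hbound T hT)).1
        linarith [(abs_le.1 (hbound T hT)).2]
      have hlb : ∀ᶠ T in Filter.atTop, (g s - ε) - 2 * C / T ≤ u T := by
        filter_upwards [Filter.eventually_ge_atTop 1] with T hT
        linarith [(abs_le.1 (hbound T hT)).1]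
      have hdiv0 : Filter.Tendsto (fun T : ℕ => 2 * C / (T:ℝ)) Filter.atTop (nhds 0) :=
        tendsto_const_div_atTop_nhds_zero_nat (2 * C)
      have htendub : Filter.Tendsto (fun T : ℕ => (g s + ε) + 2 * C / (T:ℝ))
          Filter.atTop (nhds (g s + ε)) := by
        have := Filter.Tendsto.const_add (g s + ε) hdiv0
        simpa using this
      have htendlb : Filter.Tendsto (fun T : ℕ => (g s - ε) - 2 * C / (T:ℝ))
          Filter.atTop (nhds (g s - ε)) := by
        have := Filter.Tendsto.const_sub (g s - ε) hdiv0
        simpa using this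
      -- boundedness facts
      have hconst_ub : ∀ᶠ T in Filter.atTop, u T ≤ (g s + ε) + 2 * C := by
        filter_upwards [hub, Filter.eventually_ge_atTop 1] with T h1 h2
        have hT' : (1:ℝ) ≤ T := by exact_mod_cast h2
        have : 2 * C / (T:ℝ) ≤ 2 * C := by
          rw [div_le_iff₀ (by linarith)]
          nlinarith
        linarith
      have hconst_lb : ∀ᶠ T in Filter.atTop, (g s - ε) - 2 * C ≤ u T := by
        filter_upwards [hlb, Filter.eventually_ge_atTop 1] with T h1 h2
        have hT' : (1:ℝ) ≤ T := by exact_mod_cast h2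
        have : 2 * C / (T:ℝ) ≤ 2 * C := by
          rw [div_le_iff₀ (by linarith)]
          nlinarith
        linarith
      have hbdd_le : Filter.IsBoundedUnder (· ≤ ·) Filter.atTop u :=
        ⟨(g s + ε) + 2 * C, Filter.eventually_map.2 hconst_ub⟩
      have hbdd_ge : Filter.IsBoundedUnder (· ≥ ·) Filter.atTop u :=
        ⟨(g s - ε) - 2 * C, Filter.eventually_map.2 hconst_lb⟩
      -- squeeze the liminf
      have hup : Filter.liminf u Filter.atTop ≤ g s + ε := by
        have := Filter.liminf_le_liminf hub hbdd_ge
          (htendub.isBoundedUnder_le.isCoboundedUnder_ge)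
        rwa [htendub.liminf_eq] at this
      have hlo : g s - ε ≤ Filter.liminf u Filter.atTop := by
        have := Filter.liminf_le_liminf hlb htendlb.isBoundedUnder_ge
          (hbdd_le.isCoboundedUnder_ge)
        rwa [htendlb.liminf_eq] at this
      rw [havg]
      rw [abs_le]
      constructor <;> linarith
    -- conclude the norm bound
    exact norm_le_of_forall_abs_le fun s => by
      simpa using key s
  · -- residual rate
    have := hmain k hk
    rw [hres k, hW0] at this
    exact this
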